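/- arXiv:1208.4394 — 4 statements merged into one kernel-verified Lean document; each statement's English description precedes it below -/
import Mathlib

section
/- Let f be an expansive homeomorphism of a compact metric space M with expansivity constant α, and let 0 < ε < α. Define the ε-stable set S_ε(x) = { y ∈ M : d(fⁿ x, fⁿ y) ≤ ε for all n ≥ 0 }. Then the diameters of fⁿ(S_ε(x)) converge to 0 as n → ∞, uniformly in x; that is, for every δ > 0 there exists N such that for all n ≥ N and all x ∈ M, diam(fⁿ(S_ε(x))) < δ. -/
open Filter Topology Metric

/-- diameters of fⁿ(S_ε(x)) tend to 0 uniformly in x. -/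
theorem diam_image_stable_set_tendsto_zero {M : Type*} [MetricSpace M] [CompactSpace M]
    (f : Equiv.Perm M) (hf : Continuous f) (hf' : Continuous f.symm)
    (α : ℝ) (hα : 0 < α)
    (hexp : ∀ x y : M, x ≠ y → ∃ n : ℤ, α ≤ dist ((f ^ n) x) ((f ^ n) y))
    (ε : ℝ) (hε : 0 < ε) (hεα : ε < α) :
    ∀ δ > (0 : ℝ), ∃ N : ℕ, ∀ n ≥ N, ∀ x : M,
      Metric.diam ((f ^ n) '' {y : M | ∀ m : ℕ, dist ((f ^ m) x) ((f ^ m) y) ≤ ε}) < δ := by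
  -- continuity of natural powers
  have hcontN : ∀ (g : Equiv.Perm M), Continuous g → ∀ n : ℕ,
      Continuous ((g ^ n : Equiv.Perm M) : M → M) := by
    intro g hg n
    induction n with
    | zero => simpa using continuous_id
    | succ n ih =>
      have h : ((g ^ (n+1) : Equiv.Perm M) : M → M) = ((g ^ n : Equiv.Perm M) : M → M) ∘ g := by
        ext x; simp [pow_succ, Equiv.Perm.mul_apply]
      rw [h]; exact ih.comp hg
  -- continuity of integer powers
  have hcont : ∀ m : ℤ, Continuous ((f ^ m : Equiv.Perm M) : M → M) := by
    intro m
    rcases m with n | n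
    · simpa [zpow_natCast] using hcontN f hf n
    · have h1 : ((f ^ Int.negSucc n : Equiv.Perm M) : M → M)
          = ((f⁻¹ ^ (n+1) : Equiv.Perm M) : M → M) := by
        rw [zpow_negSucc, inv_pow]
      rw [h1]
      refine hcontN f⁻¹ ?_ (n+1)
      have : ((f⁻¹ : Equiv.Perm M) : M → M) = (f.symm : M → M) := rfl
      rw [this]; exact hf'
  have comp_eq : ∀ (m : ℤ) (j : ℕ) (a : M),
      (f ^ m) ((f ^ j) a) = (f ^ (m + (j : ℤ))) a := by
    intro m j a
    rw [zpow_add, Equiv.Perm.mul_apply, zpow_natCast]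
  intro δ hδ
  by_contra hcon
  push_neg at hcon
  choose n hn x hx using hcon
  set S : ℕ → Set M := fun k => {y : M | ∀ m : ℕ, dist ((f ^ m) (x k)) ((f ^ m) y) ≤ ε} with hS
  have hpt : ∀ k, ∃ y ∈ S k, ∃ z ∈ S k,
      δ / 2 ≤ dist ((f ^ (n k)) y) ((f ^ (n k)) z) := by
    intro k
    by_contra hc
    push_neg at hc
    have hdiam : Metric.diam ((f ^ (n k)) '' S k) ≤ δ / 2 := by
      apply Metric.diam_le_of_forall_dist_le (by linarith)
      rintro _ ⟨y, hy, rfl⟩ _ ⟨z, hz, rfl⟩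
      exact (hc y hy z hz).le
    have := hx k
    linarith
  choose y hy z hz hd using hpt
  set seq : ℕ → M × M × M :=
    fun k => ((f ^ (n k)) (y k), (f ^ (n k)) (x k), (f ^ (n k)) (z k)) with hseq
  obtain ⟨⟨u, w, v⟩, -, φ, hφ, hlim⟩ :=
    isCompact_univ.tendsto_subseq (x := seq) (fun k => Set.mem_univ _)
  have h1 : Tendsto (fun k => (f ^ (n (φ k))) (y (φ k))) atTop (𝓝 u) :=
    (continuous_fst.tendsto _).comp hlim
  have h2 : Tendsto (fun k => (f ^ (n (φ k))) (x (φ k))) atTop (𝓝 w) :=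
    ((continuous_fst.comp continuous_snd).tendsto _).comp hlim
  have h3 : Tendsto (fun k => (f ^ (n (φ k))) (z (φ k))) atTop (𝓝 v) :=
    ((continuous_snd.comp continuous_snd).tendsto _).comp hlim
  -- key estimate passes to limit
  have hlarge : ∀ m : ℤ, ∀ᶠ k in atTop, 0 ≤ m + (n (φ k) : ℤ) := by
    intro m
    filter_upwards [eventually_ge_atTop (-m).toNat] with k hk
    have h1' : (-m).toNat ≤ n (φ k) := le_trans hk (le_trans hφ.le_apply (hn (φ k)))
    have h2' : ((-m).toNat : ℤ) ≤ (n (φ k) : ℤ) := by exact_mod_cast h1'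
    have h3' : -m ≤ ((-m).toNat : ℤ) := Int.self_le_toNat _
    linarith
  have bound : ∀ (m : ℤ) (q : M) (qs : ℕ → M)
      (hq : Tendsto (fun k => (f ^ (n (φ k))) (qs k)) atTop (𝓝 q))
      (hmem : ∀ k, ∀ j : ℕ, dist ((f ^ j) (x (φ k))) ((f ^ j) (qs k)) ≤ ε),
      dist ((f ^ m) w) ((f ^ m) q) ≤ ε := by
    intro m q qs hq hmem
    have hts : Tendsto
        (fun k => dist ((f ^ m) ((f ^ (n (φ k))) (x (φ k)))) ((f ^ m) ((f ^ (n (φ k))) (qs k))))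
        atTop (𝓝 (dist ((f ^ m) w) ((f ^ m) q))) :=
      Tendsto.dist (((hcont m).tendsto w).comp h2) (((hcont m).tendsto q).comp hq)
    refine le_of_tendsto hts ?_
    filter_upwards [hlarge m] with k hk
    have e1 := comp_eq m (n (φ k)) (x (φ k))
    have e2 := comp_eq m (n (φ k)) (qs k)
    rw [e1, e2]
    have ht : m + (n (φ k) : ℤ) = (((m + (n (φ k) : ℤ)).toNat : ℕ) : ℤ) :=
      (Int.toNat_of_nonneg hk).symm
    rw [ht, zpow_natCast]
    exact hmem k _
  have hbu : ∀ m : ℤ, dist ((f ^ m) w) ((f ^ m) u) ≤ ε :=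
    fun m => bound m u (fun k => y (φ k)) h1 (fun k j => hy (φ k) j)
  have hbv : ∀ m : ℤ, dist ((f ^ m) w) ((f ^ m) v) ≤ ε :=
    fun m => bound m v (fun k => z (φ k)) h3 (fun k j => hz (φ k) j)
  have huw : u = w := by
    by_contra hne
    obtain ⟨m, hm⟩ := hexp w u (fun h => hne h.symm)
    exact absurd (lt_of_le_of_lt (hbu m) hεα) (not_lt.mpr hm)
  have hvw : v = w := by
    by_contra hne
    obtain ⟨m, hm⟩ := hexp w v (fun h => hne h.symm)
    exact absurd (lt_of_le_of_lt (hbv m) hεα) (not_lt.mpr hm)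
  have hdist : Tendsto (fun k => dist ((f ^ (n (φ k))) (y (φ k))) ((f ^ (n (φ k))) (z (φ k))))
      atTop (𝓝 (dist u v)) := Tendsto.dist h1 h3
  have hge : δ / 2 ≤ dist u v :=
    ge_of_tendsto hdist (Eventually.of_forall (fun k => hd (φ k)))
  rw [huw, hvw, dist_self] at hge
  linarith
end

section
/- Let f : M → M be a homeomorphism of a compact metric space admitting a Lyapunov function, i.e., a continuous function V : U → ℝ on a neighborhood U of the diagonal in M × M with V(x,x) = 0 for all x and V(f x, f y) − V(x,y) > 0 for all (x,y) ∈ U with x ≠ y and (f x, f y) ∈ U. Then f is expansive. -/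
/-- a homeomorphism of a compact metric space admitting a Lyapunov
function is expansive. -/
theorem expansive_of_lyapunov_function {M : Type*} [MetricSpace M] [CompactSpace M]
    (f : Equiv.Perm M) (hf : Continuous f) (hf' : Continuous f.symm)
    (U : Set (M × M)) (hU : U ∈ nhdsSet (Set.diagonal M))
    (V : M × M → ℝ) (hV : ContinuousOn V U)
    (hV0 : ∀ x : M, V (x, x) = 0)
    (hVinc : ∀ x y : M, (x, y) ∈ U → x ≠ y → (f x, f y) ∈ U →
      V (f x, f y) - V (x, y) > 0) :
    ∃ α > (0 : ℝ), ∀ x y : M, x ≠ y → ∃ n : ℤ, α ≤ dist ((f ^ n) x) ((f ^ n) y) := by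
  obtain ⟨W, hWopen, hdiagW, hWU⟩ := mem_nhdsSet_iff_exists.mp hU
  have hdiagcpt : IsCompact (Set.diagonal M) := by
    have : Set.diagonal M = (fun x : M => (x, x)) '' Set.univ := by
      ext ⟨a, b⟩
      simp [Set.diagonal, eq_comm]
    rw [this]
    exact isCompact_univ.image (continuous_id.prodMk continuous_id)
  obtain ⟨δ, hδ, hthick⟩ := hdiagcpt.exists_thickening_subset_open hWopen hdiagW
  refine ⟨δ / 2, by positivity, ?_⟩
  intro x y hxy
  by_contra hcon
  push_neg at hcon
  set K : Set (M × M) := {p : M × M | dist p.1 p.2 ≤ δ / 2} with hKdef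
  have hKU : K ⊆ U := by
    intro p hp
    apply hWU; apply hthick
    rw [Metric.mem_thickening_iff]
    refine ⟨(p.1, p.1), rfl, ?_⟩
    rw [Prod.dist_eq]
    simp only [dist_self]
    have : dist p.2 p.1 ≤ δ / 2 := by rw [dist_comm]; exact hp
    exact max_lt hδ (by linarith)
  have hKcl : IsClosed K := isClosed_le (by fun_prop) continuous_const
  have hKcpt : IsCompact K := hKcl.isCompact
  set g : ℤ → M × M := fun n => ((f ^ n) x, (f ^ n) y) with hgdef
  have hgK : ∀ n : ℤ, g n ∈ K := fun n => le_of_lt (hcon n)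
  have hgU : ∀ n : ℤ, g n ∈ U := fun n => hKU (hgK n)
  have hgsucc : ∀ n : ℤ, g (n + 1) = (f (g n).1, f (g n).2) := by
    intro n
    have h : ∀ z : M, (f ^ (n + 1)) z = f ((f ^ n) z) := by
      intro z
      rw [add_comm, zpow_one_add, Equiv.Perm.mul_apply]
    simp only [hgdef, h]
  have hne : ∀ n : ℤ, (g n).1 ≠ (g n).2 := by
    intro n h
    exact hxy ((f ^ n).injective h)
  have hmono : StrictMono (fun n : ℤ => V (g n)) := by
    apply strictMono_int_of_lt_succ
    intro n
    have h := hVinc (g n).1 (g n).2 (hgU n) (hne n)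
      (by rw [← hgsucc]; exact hgU (n + 1))
    rw [hgsucc n]
    have : V ((g n).1, (g n).2) = V (g n) := by rw [Prod.mk.eta]
    linarith [h]
  have hmonoV : Monotone (fun n : ℤ => V (g n)) := hmono.monotone
  -- continuity helper
  have hVt : ∀ z ∈ U, ∀ s : ℕ → M × M, (∀ k, s k ∈ U) →
      Filter.Tendsto s Filter.atTop (nhds z) →
      Filter.Tendsto (fun k => V (s k)) Filter.atTop (nhds (V z)) := by
    intro z hz s hs ht
    exact (hV z hz).tendsto.comp
      (tendsto_nhdsWithin_iff.mpr ⟨ht, Filter.Eventually.of_forall hs⟩)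
  have hFc : Continuous (fun p : M × M => (f p.1, f p.2)) :=
    (hf.comp continuous_fst).prodMk (hf.comp continuous_snd)
  -- positive side limit point
  obtain ⟨p, hpK, φ, hφ, hgφ⟩ := hKcpt.tendsto_subseq (fun k : ℕ => hgK (k : ℤ))
  -- negative side limit point
  obtain ⟨q, hqK, ψ, hψ, hgψ⟩ := hKcpt.tendsto_subseq (fun k : ℕ => hgK (-(k : ℤ)))
  -- positive side analysis
  have h1 : Filter.Tendsto (fun k => V (g (φ k))) Filter.atTop (nhds (V p)) :=
    hVt p (hKU hpK) _ (fun k => hgU _) hgφ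
  have h2 : Filter.Tendsto (fun k => g ((φ k : ℤ) + 1)) Filter.atTop
      (nhds (f p.1, f p.2)) := by
    have := (hFc.tendsto p).comp hgφ
    simpa only [Function.comp_def, hgsucc] using this
  have hfpK : (f p.1, f p.2) ∈ K :=
    hKcl.mem_of_tendsto h2 (Filter.Eventually.of_forall fun k => hgK _)
  have h3 : Filter.Tendsto (fun k => V (g ((φ k : ℤ) + 1))) Filter.atTop
      (nhds (V (f p.1, f p.2))) :=
    hVt _ (hKU hfpK) _ (fun k => hgU _) h2
  have h4 : Filter.Tendsto (fun k => V (g (φ (k + 1)))) Filter.atTop (nhds (V p)) :=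
    h1.comp (Filter.tendsto_add_atTop_nat 1)
  have h5 : Filter.Tendsto (fun k => V (g ((φ k : ℤ) + 1))) Filter.atTop (nhds (V p)) := by
    refine tendsto_of_tendsto_of_tendsto_of_le_of_le h1 h4 ?_ ?_
    · intro k; exact hmonoV (by linarith)
    · intro k
      apply hmonoV
      have := hφ (show k < k + 1 by omega)
      exact_mod_cast this
  have hVfp : V (f p.1, f p.2) = V p := tendsto_nhds_unique h3 h5
  have hp12 : p.1 = p.2 := by
    by_contra h
    have := hVinc p.1 p.2 (by rw [Prod.mk.eta]; exact hKU hpK) h (hKU hfpK)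
    rw [Prod.mk.eta] at this
    linarith
  have hVp0 : V p = 0 := by
    rw [← Prod.mk.eta (p := p), ← hp12]
    exact hV0 p.1
  have hVg1 : V (g 1) ≤ 0 := by
    rw [← hVp0]
    refine ge_of_tendsto h5 (Filter.Eventually.of_forall fun k => ?_)
    exact hmonoV (by omega)
  -- negative side analysis
  have n1 : Filter.Tendsto (fun k => V (g (-(ψ k : ℤ)))) Filter.atTop (nhds (V q)) :=
    hVt q (hKU hqK) _ (fun k => hgU _) hgψ
  have n1' : Filter.Tendsto (fun k => g (-(ψ (k + 1) : ℤ))) Filter.atTop (nhds q) :=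
    hgψ.comp (Filter.tendsto_add_atTop_nat 1)
  have n2 : Filter.Tendsto (fun k => g (-(ψ (k + 1) : ℤ) + 1)) Filter.atTop
      (nhds (f q.1, f q.2)) := by
    have := (hFc.tendsto q).comp n1'
    simpa only [Function.comp_def, hgsucc] using this
  have hfqK : (f q.1, f q.2) ∈ K :=
    hKcl.mem_of_tendsto n2 (Filter.Eventually.of_forall fun k => hgK _)
  have n3 : Filter.Tendsto (fun k => V (g (-(ψ (k + 1) : ℤ) + 1))) Filter.atTop
      (nhds (V (f q.1, f q.2))) :=
    hVt _ (hKU hfqK) _ (fun k => hgU _) n2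
  have n4 : Filter.Tendsto (fun k => V (g (-(ψ (k + 1) : ℤ)))) Filter.atTop (nhds (V q)) :=
    n1.comp (Filter.tendsto_add_atTop_nat 1)
  have n5 : Filter.Tendsto (fun k => V (g (-(ψ (k + 1) : ℤ) + 1))) Filter.atTop
      (nhds (V q)) := by
    refine tendsto_of_tendsto_of_tendsto_of_le_of_le n4 n1 ?_ ?_
    · intro k; exact hmonoV (by linarith)
    · intro k
      apply hmonoV
      have := hψ (show k < k + 1 by omega)
      omega
  have hVfq : V (f q.1, f q.2) = V q := tendsto_nhds_unique n3 n5
  have hq12 : q.1 = q.2 := by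
    by_contra h
    have := hVinc q.1 q.2 (by rw [Prod.mk.eta]; exact hKU hqK) h (hKU hfqK)
    rw [Prod.mk.eta] at this
    linarith
  have hVq0 : V q = 0 := by
    rw [← Prod.mk.eta (p := q), ← hq12]
    exact hV0 q.1
  have hVg0 : 0 ≤ V (g 0) := by
    rw [← hVq0]
    refine le_of_tendsto n1 (Filter.Eventually.of_forall fun k => ?_)
    exact hmonoV (by omega)
  have := hmono (show (0 : ℤ) < 1 by norm_num)
  simp only at this
  linarith
end

section
/- Every expansive homeomorphism of a compact metric space admits a Lyapunov function: there exist a neighborhood U of the diagonal in M × M and a continuous V : U → ℝ with V(x,x) = 0 and V(f x, f y) > V(x,y) whenever x ≠ y, (x,y) ∈ U and (f x, f y) ∈ U. -/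
namespace LyapAux

variable {M : Type*} [MetricSpace M]

noncomputable def phi (α t : ℝ) : ℝ := max 0 (min (t - α/2) 1)

lemma phi_nonneg (α t : ℝ) : 0 ≤ phi α t := le_max_left _ _

lemma phi_le_one (α t : ℝ) : phi α t ≤ 1 :=
  max_le zero_le_one (min_le_right _ _)

lemma phi_continuous (α : ℝ) : Continuous (phi α) :=
  continuous_const.max ((continuous_id.sub continuous_const).min continuous_const)

lemma phi_eq_zero {α t : ℝ} (h : t < α/2) : phi α t = 0 :=
  max_eq_left (le_of_lt (lt_of_le_of_lt (min_le_left _ _) (by linarith)))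

lemma phi_pos {α t : ℝ} (hα : 0 < α) (h : α ≤ t) : 0 < phi α t := by
  have h1 : min (α/2) 1 ≤ min (t - α/2) 1 := min_le_min (by linarith) le_rfl
  have h2 : 0 < min (α/2) 1 := lt_min (by linarith) one_pos
  exact lt_of_lt_of_le h2 (le_trans h1 (le_max_right _ _))

lemma perm_pow_continuous (g : Equiv.Perm M) (hg : Continuous g) (n : ℕ) :
    Continuous ⇑(g ^ n) := by
  induction n with
  | zero => simpa using continuous_id
  | succ n ih =>
    have h : ⇑(g ^ (n+1)) = ⇑(g ^ n) ∘ ⇑g := by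
      funext x; simp [pow_succ, Equiv.Perm.mul_apply]
    rw [h]; exact ih.comp hg

noncomputable def lyapA (g : Equiv.Perm M) (α : ℝ) (p : M × M) : ℝ :=
  ∑' n : ℕ, (1/2 : ℝ)^n * phi α (dist ((g ^ n) p.1) ((g ^ n) p.2))

lemma lyapA_summable (g : Equiv.Perm M) (α : ℝ) (p : M × M) :
    Summable (fun n : ℕ => (1/2 : ℝ)^n * phi α (dist ((g ^ n) p.1) ((g ^ n) p.2))) := by
  apply Summable.of_nonneg_of_le
    (fun n => mul_nonneg (by positivity) (phi_nonneg _ _))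
    (fun n => ?_)
    (summable_geometric_of_lt_one (by norm_num) (by norm_num : (1/2:ℝ) < 1))
  calc (1/2 : ℝ)^n * phi α (dist ((g ^ n) p.1) ((g ^ n) p.2))
      ≤ (1/2:ℝ)^n * 1 := mul_le_mul_of_nonneg_left (phi_le_one _ _) (by positivity)
    _ = (1/2:ℝ)^n := mul_one _

lemma lyapA_nonneg (g : Equiv.Perm M) (α : ℝ) (p : M × M) : 0 ≤ lyapA g α p :=
  tsum_nonneg (fun n => mul_nonneg (by positivity) (phi_nonneg _ _))

lemma lyapA_diag (g : Equiv.Perm M) {α : ℝ} (hα : 0 < α) (x : M) :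
    lyapA g α (x, x) = 0 := by
  have h : ∀ n : ℕ, (1/2 : ℝ)^n * phi α (dist ((g ^ n) (x,x).1) ((g ^ n) (x,x).2)) = 0 := by
    intro n
    rw [show ((x,x) : M × M).1 = x from rfl, show ((x,x) : M × M).2 = x from rfl,
      dist_self, phi_eq_zero (by linarith : (0:ℝ) < α/2), mul_zero]
  rw [lyapA, tsum_congr h, tsum_zero]

lemma lyapA_le (g : Equiv.Perm M) (α : ℝ) (p : M × M) (n : ℕ) :
    (1/2 : ℝ)^n * phi α (dist ((g ^ n) p.1) ((g ^ n) p.2)) ≤ lyapA g α p :=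
  Summable.le_tsum (lyapA_summable g α p) n
    (fun m _ => mul_nonneg (by positivity) (phi_nonneg _ _))

lemma lyapA_shift (g : Equiv.Perm M) (α : ℝ) (p : M × M) :
    lyapA g α p = phi α (dist p.1 p.2) + (1/2) * lyapA g α (g p.1, g p.2) := by
  have hs := lyapA_summable g α p
  have key : ∀ n : ℕ, (1/2:ℝ)^(n+1) * phi α (dist ((g^(n+1)) p.1) ((g^(n+1)) p.2))
      = (1/2) * ((1/2:ℝ)^n *
        phi α (dist ((g^n) ((g p.1, g p.2) : M × M).1) ((g^n) ((g p.1, g p.2) : M × M).2))) := by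
    intro n
    have h1 : (g^(n+1)) p.1 = (g^n) (g p.1) := by simp [pow_succ, Equiv.Perm.mul_apply]
    have h2 : (g^(n+1)) p.2 = (g^n) (g p.2) := by simp [pow_succ, Equiv.Perm.mul_apply]
    rw [h1, h2]; ring
  calc lyapA g α p
      = (1/2:ℝ)^0 * phi α (dist ((g^0) p.1) ((g^0) p.2))
        + ∑' n:ℕ, (1/2:ℝ)^(n+1) * phi α (dist ((g^(n+1)) p.1) ((g^(n+1)) p.2)) :=
        Summable.tsum_eq_zero_add hs
    _ = phi α (dist p.1 p.2) + (1/2) * lyapA g α (g p.1, g p.2) := by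
        congr 1
        · simp
        · rw [lyapA, ← tsum_mul_left]
          exact tsum_congr key

lemma lyapA_continuous (g : Equiv.Perm M) (hg : Continuous g) (α : ℝ) :
    Continuous (lyapA g α) := by
  apply continuous_tsum (u := fun n : ℕ => (1/2:ℝ)^n)
  · intro n
    exact continuous_const.mul ((phi_continuous α).comp
      (((perm_pow_continuous g hg n).comp continuous_fst).dist
        ((perm_pow_continuous g hg n).comp continuous_snd)))
  · exact summable_geometric_of_lt_one (by norm_num) (by norm_num : (1/2:ℝ) < 1)
  · intro n p
    rw [Real.norm_eq_abs, abs_mul, abs_of_nonneg (phi_nonneg α _),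
      abs_of_nonneg (by positivity : (0:ℝ) ≤ (1/2:ℝ)^n)]
    calc (1/2 : ℝ)^n * phi α _ ≤ (1/2:ℝ)^n * 1 :=
          mul_le_mul_of_nonneg_left (phi_le_one _ _) (by positivity)
      _ = (1/2:ℝ)^n := mul_one _

end LyapAux

open LyapAux in
/-- every expansive homeomorphism of a compact metric space admits a
Lyapunov function. -/
theorem lyapunov_function_of_expansive {M : Type*} [MetricSpace M] [CompactSpace M]
    (f : Equiv.Perm M) (hf : Continuous f) (hf' : Continuous f.symm)
    (hexp : ∃ α > (0 : ℝ), ∀ x y : M, x ≠ y → ∃ n : ℤ, α ≤ dist ((f ^ n) x) ((f ^ n) y)) :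
    ∃ (U : Set (M × M)) (V : M × M → ℝ),
      U ∈ nhdsSet (Set.diagonal M) ∧ ContinuousOn V U ∧
      (∀ x : M, V (x, x) = 0) ∧
      (∀ x y : M, x ≠ y → (x, y) ∈ U → (f x, f y) ∈ U → V (x, y) < V (f x, f y)) := by
  obtain ⟨α, hα, hexp⟩ := hexp
  refine ⟨{p : M × M | dist p.1 p.2 < α/2},
    fun p => lyapA f α p - lyapA f.symm α p, ?_, ?_, ?_, ?_⟩
  · refine (isOpen_lt (continuous_fst.dist continuous_snd) continuous_const).mem_nhdsSet.mpr ?_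
    intro p hp
    have : p.1 = p.2 := hp
    simp only [Set.mem_setOf_eq, this, dist_self]
    linarith
  · exact ((lyapA_continuous f hf α).sub (lyapA_continuous f.symm hf' α)).continuousOn
  · intro x
    show lyapA f α (x, x) - lyapA f.symm α (x, x) = 0
    rw [lyapA_diag f hα, lyapA_diag f.symm hα, sub_zero]
  · intro x y hxy hU hfU
    simp only [Set.mem_setOf_eq] at hU hfU
    set A := lyapA f α (x, y) with hAdef
    set B := lyapA f.symm α (x, y) with hBdef
    have hA : A = (1/2) * lyapA f α (f x, f y) := by
      have := lyapA_shift f α (x, y)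
      rwa [phi_eq_zero hU, zero_add] at this
    have hB : lyapA f.symm α (f x, f y) = (1/2) * B := by
      have := lyapA_shift f.symm α (f x, f y)
      rwa [phi_eq_zero hfU, zero_add, Equiv.symm_apply_apply, Equiv.symm_apply_apply] at this
    have hBnn : 0 ≤ B := lyapA_nonneg _ _ _
    have hAnn : 0 ≤ A := lyapA_nonneg _ _ _
    have pos : 0 < A + B/2 := by
      obtain ⟨n, hn⟩ := hexp x y hxy
      rcases n with m | m
      · -- forward iterate
        have hn' : α ≤ dist ((f ^ m) x) ((f ^ m) y) := by
          rwa [Int.ofNat_eq_coe, zpow_natCast] at hn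
        have hterm : 0 < (1/2:ℝ)^m * phi α (dist ((f ^ m) x) ((f ^ m) y)) :=
          mul_pos (by positivity) (phi_pos hα hn')
        have hle := lyapA_le f α (x, y) m
        simp only at hle
        have : 0 < A := lt_of_lt_of_le hterm hle
        linarith
      · -- backward iterate
        have heq : f ^ (Int.negSucc m) = f.symm ^ (m+1) := by
          rw [zpow_negSucc, ← inv_pow]
          rfl
        have hn' : α ≤ dist ((f.symm ^ (m+1)) x) ((f.symm ^ (m+1)) y) := by
          rwa [heq] at hn
        have hterm : 0 < (1/2:ℝ)^(m+1) * phi α (dist ((f.symm ^ (m+1)) x) ((f.symm ^ (m+1)) y)) :=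
          mul_pos (by positivity) (phi_pos hα hn')
        have hle := lyapA_le f.symm α (x, y) (m+1)
        simp only at hle
        have : 0 < B := lt_of_lt_of_le hterm hle
        linarith
    simp only
    rw [hB]
    linarith
end

section
/- Let f be an expansive homeomorphism of a compact metric space with expansivity constant α, and 0 < ε < α. If x is a Lyapunov stable point, then for every ε' ≤ ε there exists σ > 0 such that for all n ≥ 0, the set f⁻ⁿ(S_{ε'}(x)) contains the open ball of radius σ around f⁻ⁿ(x), provided M is locally connected and connected. (Step 2 of Lewowicz's no-stable-points theorem.) -/
/-!
Suppose no uniform radius exists, and fix `δ ≤ ε'` from Lyapunov stability. For every `k`, a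
small connected neighbourhood `C` of some `y = f⁻ⁿ x` meets both `S_{ε'}(y)` and its complement,
hence meets its frontier in a point `w`. If the orbits of `y` and `w` stayed `δ`-close, finitely
many open conditions up to time `n` together with stability of `x = fⁿ y` would put a whole
neighbourhood of `w` inside `S_{ε'}(y)`; so they are `δ`-apart at some time `t`, and `t ≥ k`
because `C` is small for `f, …, f^{k-1}`. The pair `(f^t y, f^t w)` is `δ`-separated and
`ε'`-close from time `-k` on. A limit of these pairs as `k → ∞` is a pair of distinct points whose
full orbits stay `ε' < α` close, contradicting expansivity.
-/

open Metric

/-- A point is Lyapunov stable for (the iterates of) `f`. -/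
def LyapunovStable {M : Type*} [MetricSpace M] (f : Equiv.Perm M) (x : M) : Prop :=
  ∀ ε > (0 : ℝ), ∃ δ > (0 : ℝ), ∀ y : M, dist x y < δ →
    ∀ n : ℕ, dist ((f ^ n) x) ((f ^ n) y) < ε

theorem LyapunovStable.exists_pos_le_forall_dist_lt {M : Type*} [MetricSpace M]
    {f : Equiv.Perm M} {x : M} {ε : ℝ} (hx : LyapunovStable f x) (hε : 0 < ε) :
    ∃ δ > 0, δ ≤ ε ∧ ∀ y, dist x y < δ → ∀ n : ℕ, dist ((f ^ n) x) ((f ^ n) y) < ε := by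
  obtain ⟨δ, hδ, h⟩ := hx ε hε
  exact ⟨min δ ε, lt_min hδ hε, min_le_right _ _,
    fun y hy => h y (hy.trans_le (min_le_left _ _))⟩

theorem IsPreconnected.inter_frontier_nonempty {X : Type*} [TopologicalSpace X] {s t : Set X}
    (hs : IsPreconnected s) (hst : (s ∩ t).Nonempty) (hs't : (s \ t).Nonempty) :
    (s ∩ frontier t).Nonempty := by
  by_contra! h
  have hfr : ∀ x ∈ s, x ∉ frontier t := fun x hx hxt => h.subset ⟨hx, hxt⟩
  have hsub : s ⊆ interior t ∪ (closure t)ᶜ := by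
    intro x hx
    by_cases hxi : x ∈ interior t
    · exact .inl hxi
    · exact .inr fun hxc => hfr x hx ⟨hxc, hxi⟩
  obtain ⟨x, hxs, hxt⟩ := hst
  obtain ⟨z, hzs, hzt⟩ := hs't
  obtain ⟨y, -, hyi, hyc⟩ := hs _ _ isOpen_interior isClosed_closure.isOpen_compl hsub
    ⟨x, hxs, by_contra fun hxi => hfr x hxs ⟨subset_closure hxt, hxi⟩⟩
    ⟨z, hzs, (hsub hzs).resolve_left fun hzi => hzt (interior_subset hzi)⟩
  exact hyc (interior_subset_closure hyi)

theorem exists_pos_forall_exists_isPreconnected_between_balls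
    {M : Type*} [MetricSpace M] [CompactSpace M] [LocallyConnectedSpace M] {η : ℝ} (hη : 0 < η) :
    ∃ ρ > 0, ∀ q : M, ∃ C, IsPreconnected C ∧ ball q ρ ⊆ C ∧ C ⊆ ball q η := by
  have hV (p : M) : ∃ V ⊆ ball p (η / 2), IsOpen V ∧ p ∈ V ∧ IsConnected V :=
    locallyConnectedSpace_iff_subsets_isOpen_isConnected.mp ‹_› p _
      (ball_mem_nhds p (by positivity))
  choose V hVball hVopen hpV hVconn using hV
  obtain ⟨ρ, hρ, hleb⟩ := lebesgue_number_lemma_of_metric isCompact_univ hVopen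
    fun q _ => Set.mem_iUnion.mpr ⟨q, hpV q⟩
  refine ⟨ρ, hρ, fun q => ?_⟩
  obtain ⟨p, hp⟩ := hleb q (Set.mem_univ q)
  refine ⟨V p, (hVconn p).isPreconnected, hp, fun c hc => ?_⟩
  have hq : dist q p < η / 2 := hVball p (hp (mem_ball_self hρ))
  have hc : dist c p < η / 2 := hVball p hc
  calc dist c q ≤ dist c p + dist q p := dist_triangle_right _ _ _
    _ < η := by linarith

namespace Equiv.Perm

variable {M : Type*} [MetricSpace M] {f : Perm M}

theorem continuous_pow_of_continuous (hf : Continuous f) (n : ℕ) : Continuous ⇑(f ^ n) := by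
  rw [coe_pow]
  exact hf.iterate n

theorem continuous_zpow_of_continuous (hf : Continuous f) (hf' : Continuous f.symm) (n : ℤ) :
    Continuous ⇑(f ^ n) := by
  induction n using Int.induction_on with
  | zero => exact continuous_id
  | succ n ih => rw [zpow_add_one, coe_mul]; exact ih.comp hf
  | pred n ih => rw [zpow_sub_one, coe_mul]; exact ih.comp hf'

theorem exists_pos_forall_dist_pow_lt [CompactSpace M] (hf : Continuous f) (k : ℕ) {δ : ℝ}
    (hδ : 0 < δ) :
    ∃ η > 0, ∀ u v, dist u v < η → ∀ s < k, dist ((f ^ s) u) ((f ^ s) v) < δ := by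
  have hequi : UniformEquicontinuous fun s : Fin k => ⇑(f ^ (s : ℕ)) :=
    uniformEquicontinuous_finite.mpr fun s =>
      CompactSpace.uniformContinuous_of_continuous (continuous_pow_of_continuous hf s)
  obtain ⟨η, hη, h⟩ := Metric.uniformEquicontinuous_iff.mp hequi δ hδ
  exact ⟨η, hη, fun u v huv s hs => h u v huv ⟨s, hs⟩⟩

/-- The forward `ε`-stable set `S_ε(x)`. -/
def stableSet (f : Perm M) (ε : ℝ) (x : M) : Set M :=
  {y | ∀ m : ℕ, dist ((f ^ m) x) ((f ^ m) y) ≤ ε}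

variable {ε : ℝ} {x y : M}

theorem isClosed_stableSet (hf : Continuous f) : IsClosed (f.stableSet ε x) := by
  simp only [stableSet, Set.ofPred_forall]
  exact isClosed_iInter fun m =>
    isClosed_le (continuous_const.dist (continuous_pow_of_continuous hf m)) continuous_const

theorem mem_stableSet_self (hε : 0 ≤ ε) : x ∈ f.stableSet ε x := fun m => by
  rwa [dist_self]

theorem pow_apply_mem_stableSet (h : y ∈ f.stableSet ε x) (n : ℕ) :
    (f ^ n) y ∈ f.stableSet ε ((f ^ n) x) := fun m => by
  simpa only [← mul_apply, ← pow_add] using h (m + n)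

theorem dist_zpow_pow_le_of_mem_stableSet (h : y ∈ f.stableSet ε x) {t : ℕ} {j : ℤ}
    (hj : -t ≤ j) : dist ((f ^ j) ((f ^ t) x)) ((f ^ j) ((f ^ t) y)) ≤ ε := by
  obtain ⟨m, hm⟩ : ∃ m : ℕ, j + t = m := Int.eq_ofNat_of_zero_le (by omega)
  have hpow : f ^ j * f ^ t = f ^ m := by rw [← zpow_natCast, ← zpow_add, hm, zpow_natCast]
  simpa only [← mul_apply, hpow] using h m

variable {δ : ℝ}

theorem exists_le_dist_of_mem_frontier_stableSet (hf : Continuous f) (hδε : δ ≤ ε)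
    (hδ : ∀ y, dist x y < δ → ∀ m : ℕ, dist ((f ^ m) x) ((f ^ m) y) < ε) {n : ℕ} {y w : M}
    (hy : (f ^ n) y = x) (hw : w ∈ frontier (f.stableSet ε y)) :
    ∃ t : ℕ, δ ≤ dist ((f ^ t) y) ((f ^ t) w) := by
  by_contra! hclose
  set U := {w' | ∀ t ∈ Set.Iic n, dist ((f ^ t) y) ((f ^ t) w') < δ}
  have hU : IsOpen U := by
    simp only [U, Set.ofPred_forall]
    exact (Set.finite_Iic n).isOpen_biInter fun t _ =>
      isOpen_lt (continuous_const.dist (continuous_pow_of_continuous hf t)) continuous_const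
  have hUS : U ⊆ f.stableSet ε y := by
    intro w' hw' m
    rcases le_or_gt m n with hmn | hnm
    · exact (hw' m hmn).le.trans hδε
    · obtain ⟨l, rfl⟩ := Nat.exists_eq_add_of_le hnm.le
      have := hδ _ (hy ▸ hw' n (Set.mem_Iic.2 le_rfl)) l
      simpa only [← hy, ← mul_apply, ← pow_add, add_comm n l] using this.le
  exact hw.2 (interior_maximal hUS hU fun t _ => hclose t)

theorem exists_pos_separated_pair_of_notMem_stableSet [CompactSpace M]
    [LocallyConnectedSpace M] (hf : Continuous f) (hδ0 : 0 < δ) (hδε : δ ≤ ε)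
    (hδ : ∀ y, dist x y < δ → ∀ m : ℕ, dist ((f ^ m) x) ((f ^ m) y) < ε) (k : ℕ) :
    ∃ σ > 0, ∀ (n : ℕ) (y z : M), (f ^ n) y = x → dist y z < σ →
      (f ^ n) z ∉ f.stableSet ε x →
      ∃ p q : M, δ ≤ dist p q ∧ ∀ j : ℤ, -k ≤ j → dist ((f ^ j) p) ((f ^ j) q) ≤ ε := by
  obtain ⟨η, hη, hsmall⟩ := exists_pos_forall_dist_pow_lt hf k hδ0
  obtain ⟨ρ, hρ, hC⟩ := exists_pos_forall_exists_isPreconnected_between_balls (M := M) hη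
  refine ⟨ρ, hρ, fun n y z hy hyz hz => ?_⟩
  obtain ⟨C, hCconn, hballC, hCball⟩ := hC y
  obtain ⟨w, hwC, hw⟩ := hCconn.inter_frontier_nonempty
    ⟨y, hballC (mem_ball_self hρ), mem_stableSet_self (hδ0.le.trans hδε)⟩
    ⟨z, hballC (mem_ball'.2 hyz), fun hzS => hz (hy ▸ pow_apply_mem_stableSet hzS n)⟩
  obtain ⟨t, ht⟩ := exists_le_dist_of_mem_frontier_stableSet hf hδε hδ hy hw
  have hkt : k ≤ t := not_lt.1 fun htk =>
    (hsmall y w (mem_ball'.1 (hCball hwC)) t htk).not_ge ht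
  exact ⟨(f ^ t) y, (f ^ t) w, ht, fun j hj =>
    dist_zpow_pow_le_of_mem_stableSet ((isClosed_stableSet hf).frontier_subset hw) (by omega)⟩

theorem exists_ne_forall_dist_zpow_le [CompactSpace M] (hf : Continuous f)
    (hf' : Continuous f.symm) {r : ℝ} (hr : 0 < r)
    (h : ∀ k : ℕ, ∃ p q : M, r ≤ dist p q ∧ ∀ j : ℤ, -k ≤ j → dist ((f ^ j) p) ((f ^ j) q) ≤ ε) :
    ∃ a b : M, a ≠ b ∧ ∀ j : ℤ, dist ((f ^ j) a) ((f ^ j) b) ≤ ε := by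
  choose p q hpq hwin using h
  obtain ⟨⟨a, b⟩, -, φ, hφ, hlim⟩ :=
    isCompact_univ.tendsto_subseq (x := fun k => (p k, q k)) fun _ => Set.mem_univ _
  refine ⟨a, b, fun hab => ?_, fun j => ?_⟩
  · have hrab : r ≤ dist a b := ge_of_tendsto ((continuous_dist.tendsto _).comp hlim)
      (.of_forall fun k => hpq (φ k))
    rw [hab, dist_self] at hrab
    linarith
  · have hfj := continuous_zpow_of_continuous hf hf' j
    have hcont : Continuous fun u : M × M => dist ((f ^ j) u.1) ((f ^ j) u.2) := by fun_prop
    refine le_of_tendsto ((hcont.tendsto _).comp hlim) ?_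
    filter_upwards [Filter.eventually_ge_atTop j.natAbs] with k hk
    have hkφ : k ≤ φ k := hφ.le_apply
    exact hwin (φ k) j (by omega)

end Equiv.Perm

open Equiv.Perm

theorem backward_images_of_stable_set_contain_uniform_balls_general
    {M : Type*} [MetricSpace M] [CompactSpace M]
    [LocallyConnectedSpace M]
    (f : Equiv.Perm M) (hf : Continuous f) (hf' : Continuous f.symm)
    (α : ℝ)
    (hexp : ∀ x y : M, x ≠ y → ∃ n : ℤ, α ≤ dist ((f ^ n) x) ((f ^ n) y))
    (ε : ℝ) (hεα : ε < α)
    (x : M) (hx : LyapunovStable f x) :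
    ∀ ε' : ℝ, 0 < ε' → ε' ≤ ε → ∃ σ > (0 : ℝ), ∀ n : ℕ,
      Metric.ball ((f ^ (-(n : ℤ))) x) σ ⊆
        (f ^ (-(n : ℤ))) '' {y : M | ∀ m : ℕ, dist ((f ^ m) x) ((f ^ m) y) ≤ ε'} := by
  intro ε' hε' hε'ε
  obtain ⟨δ, hδ0, hδε, hδ⟩ := hx.exists_pos_le_forall_dist_lt hε'
  by_contra! hcon
  have hwindows : ∀ k : ℕ, ∃ p q : M, δ ≤ dist p q ∧
      ∀ j : ℤ, -k ≤ j → dist ((f ^ j) p) ((f ^ j) q) ≤ ε' := by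
    intro k
    obtain ⟨σ, hσ, hpair⟩ :=
      exists_pos_separated_pair_of_notMem_stableSet hf hδ0 hδε hδ k
    obtain ⟨n, hn⟩ := hcon σ hσ
    obtain ⟨z, hz, hzS⟩ := Set.not_subset.1 hn
    exact hpair n _ z (by simp) (mem_ball'.1 hz) fun h => hzS ⟨_, h, by simp⟩
  obtain ⟨a, b, hab, hle⟩ := exists_ne_forall_dist_zpow_le hf hf' hδ0 hwindows
  obtain ⟨j, hj⟩ := hexp a b hab
  linarith [hle j]

/-- Step 2 of the no-stable-points theorem: if x is Lyapunov stable then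
for every ε' ≤ ε there is σ > 0 such that f⁻ⁿ(S_{ε'}(x)) contains the σ-ball around
f⁻ⁿ(x) for all n ≥ 0. -/
theorem backward_images_of_stable_set_contain_uniform_balls
    {M : Type*} [MetricSpace M] [CompactSpace M]
    [ConnectedSpace M] [LocallyConnectedSpace M]
    (f : Equiv.Perm M) (hf : Continuous f) (hf' : Continuous f.symm)
    (α : ℝ) (hα : 0 < α)
    (hexp : ∀ x y : M, x ≠ y → ∃ n : ℤ, α ≤ dist ((f ^ n) x) ((f ^ n) y))
    (ε : ℝ) (hε : 0 < ε) (hεα : ε < α)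
    (x : M) (hx : LyapunovStable f x) :
    ∀ ε' : ℝ, 0 < ε' → ε' ≤ ε → ∃ σ > (0 : ℝ), ∀ n : ℕ,
      Metric.ball ((f ^ (-(n : ℤ))) x) σ ⊆
        (f ^ (-(n : ℤ))) '' {y : M | ∀ m : ℕ, dist ((f ^ m) x) ((f ^ m) y) ≤ ε'} :=
  backward_images_of_stable_set_contain_uniform_balls_general f hf hf' α hexp ε hεα x hx
end
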